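/- If G is a finite chordal graph, then ω₁(G) ≤ χ₁(G) ≤ ⌈χ(G)/2⌉. -/

import Mathlib

open SimpleGraph

/-- A 1-selection on `G`: each vertex `v` selects (at most) one pair containing `v`;
deleting the selected pairs from the edge set removes at most one edge incident
to each vertex.  (Selecting a non-edge, e.g. the diagonal, deletes nothing at `v`.) -/
def IsOneSelection {V : Type*} (G : SimpleGraph V) (f : V → Sym2 V) : Prop :=
  ∀ v : V, v ∈ f v

/-- The 1-removed graph `G_f`. -/
def oneRemoved {V : Type*} (G : SimpleGraph V) (f : V → Sym2 V) : SimpleGraph V :=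
  G.deleteEdges (Set.range f)

/-- The chromatic number of `G` as a natural number. -/
noncomputable def chromNum {V : Type*} (G : SimpleGraph V) : ℕ :=
  sInf {n : ℕ | G.Colorable n}

/-- The robust chromatic number `χ₁(G)`: the minimum of `χ(G_f)` over all 1-selections. -/
noncomputable def robustChromNum {V : Type*} (G : SimpleGraph V) : ℕ :=
  sInf {m : ℕ | ∃ f : V → Sym2 V, IsOneSelection G f ∧ chromNum (oneRemoved G f) = m}

/-- The robust clique number `ω₁(G)`: the minimum of `ω(G_f)` over all 1-selections. -/
noncomputable def robustCliqueNum {V : Type*} (G : SimpleGraph V) : ℕ :=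
  sInf {m : ℕ | ∃ f : V → Sym2 V, IsOneSelection G f ∧ (oneRemoved G f).cliqueNum = m}

/-- A set of vertices is independent if no two of its elements are adjacent. -/
def IsIndepVxSet {V : Type*} (G : SimpleGraph V) (s : Set V) : Prop :=
  s.Pairwise fun a b => ¬ G.Adj a b

/-- The independence number of `G`. -/
noncomputable def indepNum {V : Type*} (G : SimpleGraph V) : ℕ :=
  sSup {n : ℕ | ∃ s : Finset V, IsIndepVxSet G ↑s ∧ s.card = n}

/-- The robust independence number `α₁(G)`: the maximum of `α(G_f)` over all 1-selections. -/
noncomputable def robustIndepNum {V : Type*} (G : SimpleGraph V) : ℕ :=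
  sSup {m : ℕ | ∃ f : V → Sym2 V, IsOneSelection G f ∧ _root_.indepNum (oneRemoved G f) = m}

/-- `U` is robust independent in `G` if some 1-selection makes it independent. -/
def IsRobustIndep {V : Type*} (G : SimpleGraph V) (U : Set V) : Prop :=
  ∃ f : V → Sym2 V, IsOneSelection G f ∧ IsIndepVxSet (oneRemoved G f) U

/-- Threshold graph. -/
def IsThresholdGraph {V : Type*} (G : SimpleGraph V) : Prop :=
  ∃ (h : ℝ) (g : V → ℝ), ∀ x y : V, x ≠ y → (G.Adj x y ↔ g x + g y > h)

/-- `G` is ω-unique: it has exactly one clique of order `ω(G)`. -/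
def IsOmegaUnique {V : Type*} (G : SimpleGraph V) : Prop :=
  ∃! s : Finset V, G.IsNClique G.cliqueNum s

/-- Split graph: vertex set partitions into a clique and an independent set. -/
def IsSplitGraph {V : Type*} (G : SimpleGraph V) : Prop :=
  ∃ A : Set V, G.IsClique A ∧ IsIndepVxSet G Aᶜ

/-- Chordal graph: no induced cycle of length greater than 3. -/
def IsChordalGraph {V : Type*} (G : SimpleGraph V) : Prop :=
  ∀ n : ℕ, 4 ≤ n → ¬ ∃ φ : Fin n ↪ V,
    ∀ i j : Fin n, G.Adj (φ i) (φ j) ↔ (SimpleGraph.cycleGraph n).Adj i j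

/-- Interval graph: vertices can be assigned nonempty closed real intervals so that
two distinct vertices are adjacent iff their intervals intersect. -/
def IsIntervalGraph {V : Type*} (G : SimpleGraph V) : Prop :=
  ∃ a b : V → ℝ, (∀ v, a v ≤ b v) ∧
    ∀ u v : V, u ≠ v →
      (G.Adj u v ↔ (Set.Icc (a u) (b u) ∩ Set.Icc (a v) (b v)).Nonempty)

/-- Unit interval graph: vertices can be labelled by reals so that two distinct
vertices are adjacent iff their labels are at distance less than 1. -/
def IsUnitIntervalGraph {V : Type*} (G : SimpleGraph V) : Prop :=
  ∃ r : V → ℝ, ∀ u v : V, u ≠ v → (G.Adj u v ↔ |r u - r v| < 1)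

/-- Quasi-unicyclic: every connected component contains at most one cycle,
i.e. any two cycles lying in the same component have the same edge set. -/
def QuasiUnicyclic {V : Type*} [DecidableEq V] (G : SimpleGraph V) : Prop :=
  ∀ (u v : V) (p : G.Walk u u) (q : G.Walk v v),
    p.IsCycle → q.IsCycle → G.Reachable u v →
      p.edges.toFinset = q.edges.toFinset

/-- The Kneser graph `KG(n,k)`. -/
def kneserGraph (n k : ℕ) : SimpleGraph {s : Finset (Fin n) // s.card = k} where
  Adj a b := a ≠ b ∧ Disjoint a.1 b.1
  symm := by
    constructor
    intro a b hab
    exact ⟨hab.1.symm, hab.2.symm⟩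
  loopless := by
    constructor
    intro a ha
    exact ha.1 rfl

/-!
Merge the colours `2i` and `2i + 1` of an optimal colouring `c` of `G`. The edges of `G` inside
the merged classes form a graph `F` which is again chordal (an induced cycle of `F` is connected,
so it stays inside one class and is induced in `G`) and bipartite (coloured by `c mod 2`). Such a
graph is a forest: a shortest cycle has no chord, so it is an induced cycle, which is excluded
for length at least 4 by chordality and for length 3 by bipartiteness. In a forest every vertex
can select the edge to its parent towards a chosen root, which deletes all edges of `F`; then
`c / 2` properly colours `G_f` with `⌈χ(G) / 2⌉` colours. The bound `ω₁ ≤ χ₁` is `ω ≤ χ` for a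
1-removed graph realising `χ₁`.
-/

namespace SimpleGraph

theorem cycleGraph_adj_iff_val {n : ℕ} {u v : Fin n} :
    (cycleGraph n).Adj u v ↔ u ≠ v ∧
      (u.val + 1 = v.val ∨ v.val + 1 = u.val ∨ u.val + 1 = n ∧ v.val = 0 ∨
        v.val + 1 = n ∧ u.val = 0) := by
  rw [cycleGraph_adj', Fin.ne_iff_vne]
  rcases lt_trichotomy u v with h | rfl | h
  · rw [Fin.sub_val_of_le h.le, Fin.coe_sub_iff_lt.mpr h]
    omega
  · rw [Fin.sub_val_of_le le_rfl]
    omega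
  · rw [Fin.sub_val_of_le h.le, Fin.coe_sub_iff_lt.mpr h]
    omega

variable {V α : Type*} {G : SimpleGraph V}

theorem Reachable.eq_of_forall_adj {g : V → α} (hg : ∀ ⦃a b⦄, G.Adj a b → g a = g b)
    {u v : V} (h : G.Reachable u v) : g u = g v := by
  obtain ⟨p⟩ := h
  induction p with
  | nil => rfl
  | cons hadj _ ih => exact (hg hadj).trans ih

theorem Copy.cycleGraph_isContained_of_adj {n : ℕ} (f : Copy (cycleGraph n) G) {i j : Fin n}
    (hij : i < j) (hadj : G.Adj (f i) (f j)) : cycleGraph (j.val - i.val + 1) ⊑ G := by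
  have hconsec : ∀ a b : Fin n, a.val + 1 = b.val → G.Adj (f a) (f b) := fun a b hab =>
    f.toHom.map_adj (cycleGraph_adj_iff_val.mpr ⟨by omega, by omega⟩)
  refine ⟨⟨⟨fun k => f ⟨i + k, by omega⟩, fun {k l} hkl => ?_⟩, fun k l hkl => ?_⟩⟩
  · obtain ⟨-, h | h | ⟨hk, hl⟩ | ⟨hl, hk⟩⟩ := cycleGraph_adj_iff_val.mp hkl
    · exact hconsec _ _ (by simp only; omega)
    · exact (hconsec _ _ (by simp only; omega)).symm
    · convert hadj.symm using 2 <;> ext <;> simp only <;> omega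
    · convert hadj using 2 <;> ext <;> simp only <;> omega
  · have := congrArg Fin.val (f.injective hkl)
    ext
    simp only at this
    omega

theorem exists_cycleGraph_embedding_of_not_isAcyclic (h : ¬ G.IsAcyclic) :
    ∃ n, 3 ≤ n ∧ Nonempty (cycleGraph n ↪g G) := by
  classical
  have hex : ∃ n, 3 ≤ n ∧ cycleGraph n ⊑ G := by
    simpa [isAcyclic_iff_free_cycleGraph, Free] using h
  obtain ⟨hn3, ⟨f⟩⟩ := Nat.find_spec hex
  refine ⟨_, hn3, ⟨{ toFun := f, inj' := f.injective, map_rel_iff' := fun {a b} => ?_ }⟩⟩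
  refine ⟨fun hab => ?_, f.toHom.map_adj⟩
  by_contra hnot
  wlog hlt : a < b generalizing a b
  · exact this hab.symm (fun h => hnot h.symm)
      (lt_of_le_of_ne (not_lt.mp hlt) fun h => hab.ne (by rw [h]))
  rw [cycleGraph_adj_iff_val] at hnot
  exact Nat.find_min hex (m := b - a + 1) (by omega)
    ⟨by omega, f.cycleGraph_isContained_of_adj hlt hab⟩

theorem IsAcyclic.exists_selection_edgeSet_subset (hG : G.IsAcyclic) :
    ∃ f : V → Sym2 V, (∀ v, v ∈ f v) ∧ G.edgeSet ⊆ Set.range f := by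
  choose root hroot using fun C : G.ConnectedComponent => Quot.exists_rep C
  choose p hp using fun v =>
    (ConnectedComponent.exact (hroot (G.connectedComponentMk v))).exists_isPath
  refine ⟨fun v => s(v, (p v).penultimate), fun v => Sym2.mem_mk_left _ _, fun e he => ?_⟩
  induction e using Sym2.ind with
  | _ a b =>
  have hcc : G.connectedComponentMk b = G.connectedComponentMk a :=
    (ConnectedComponent.connectedComponentMk_eq_of_adj he).symm
  set q := (p b).copy (congrArg root hcc) rfl
  by_cases ha : a ∈ q.support
  · refine ⟨b, ?_⟩
    change s(b, (p b).penultimate) = s(a, b)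
    rw [← hG.eq_penultimate_of_adj_end (hp b) he.symm (by simpa [q] using ha), Sym2.eq_swap]
  · have hq : q.IsPath := (Walk.isPath_copy _ _ _).mpr (hp b)
    refine ⟨a, ?_⟩
    change s(a, (p a).penultimate) = s(a, b)
    rw [← hG.eq_penultimate_of_adj_end (hp a) he
      (hG.mem_support_of_ne_mem_support_of_adj_of_isPath (hp a) hq he ha)]

def fiberwise (G : SimpleGraph V) (g : V → α) : SimpleGraph V where
  Adj a b := G.Adj a b ∧ g a = g b
  symm := ⟨fun _ _ h => ⟨h.1.symm, h.2.symm⟩⟩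
  loopless := ⟨fun _ h => h.1.ne rfl⟩

@[simp]
theorem fiberwise_adj {g : V → α} {a b : V} :
    (G.fiberwise g).Adj a b ↔ G.Adj a b ∧ g a = g b :=
  Iff.rfl

def deleteEdgesFiberwiseColoring (g : V → α) :
    (G.deleteEdges (G.fiberwise g).edgeSet).Coloring α :=
  Coloring.mk g fun hab heq => by
    simp only [deleteEdges_adj, mem_edgeSet, fiberwise_adj] at hab
    exact hab.2 ⟨hab.1, heq⟩

theorem colorable_fiberwise_div_two (C : G.Coloring ℕ) : (G.fiberwise (C · / 2)).Colorable 2 :=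
  (colorable_iff_exists_bdd_nat_coloring 2).mpr
    ⟨Coloring.mk (C · % 2) fun {a b} hab heq => by
      rw [fiberwise_adj] at hab
      exact C.valid hab.1 (by have := hab.2; omega),
      fun _ => Nat.mod_lt _ two_pos⟩

end SimpleGraph

section

variable {V α : Type*} {G : SimpleGraph V}

theorem isChordalGraph_iff :
    IsChordalGraph G ↔ ∀ n, 4 ≤ n → IsEmpty (cycleGraph n ↪g G) :=
  forall₂_congr fun _ _ =>
    ⟨fun h => ⟨fun e => h ⟨e.toEmbedding, fun _ _ => e.map_rel_iff⟩⟩,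
      fun h ⟨φ, hφ⟩ => h.false ⟨φ, hφ _ _⟩⟩

theorem IsChordalGraph.fiberwise (hG : IsChordalGraph G) (g : V → α) :
    IsChordalGraph (G.fiberwise g) := by
  rw [isChordalGraph_iff] at hG ⊢
  refine fun n hn => ⟨fun e => (hG n hn).false ⟨e.toEmbedding, fun {i j} => ?_⟩⟩
  have hconst : g (e i) = g (e j) :=
    (cycleGraph_preconnected i j).eq_of_forall_adj (g := fun k => g (e k))
      fun _ _ hkl => (fiberwise_adj.mp (e.map_rel_iff.mpr hkl)).2
  exact ⟨fun hij => e.map_rel_iff.mp ⟨hij, hconst⟩,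
    fun hij => (fiberwise_adj.mp (e.map_rel_iff.mpr hij)).1⟩

theorem IsChordalGraph.isAcyclic_of_cliqueFree_three (hG : IsChordalGraph G)
    (h3 : G.CliqueFree 3) : G.IsAcyclic := by
  by_contra hcyc
  obtain ⟨n, hn, ⟨e⟩⟩ := exists_cycleGraph_embedding_of_not_isAcyclic hcyc
  rcases hn.eq_or_lt with rfl | hn
  · rw [cycleGraph_three_eq_top] at e
    exact (cliqueFree_iff.mp h3).false e.toCopy
  · exact (isChordalGraph_iff.mp hG n hn).false e

theorem colorable_chromNum [Fintype V] (G : SimpleGraph V) : G.Colorable (chromNum G) :=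
  Nat.sInf_mem (s := {n | G.Colorable n}) ⟨_, G.colorable_of_fintype⟩

theorem chromNum_le_of_colorable {n : ℕ} (h : G.Colorable n) : chromNum G ≤ n :=
  Nat.sInf_le h

theorem cliqueNum_le_chromNum [Fintype V] (G : SimpleGraph V) : G.cliqueNum ≤ chromNum G := by
  obtain ⟨s, hs⟩ := G.exists_isNClique_cliqueNum
  exact hs.card_eq ▸ hs.isClique.card_le_of_colorable (colorable_chromNum G)

theorem robustChromNum_le {f : V → Sym2 V} (hf : IsOneSelection G f) :
    robustChromNum G ≤ chromNum (oneRemoved G f) :=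
  Nat.sInf_le ⟨f, hf, rfl⟩

theorem robustCliqueNum_le {f : V → Sym2 V} (hf : IsOneSelection G f) :
    robustCliqueNum G ≤ (oneRemoved G f).cliqueNum :=
  Nat.sInf_le ⟨f, hf, rfl⟩

theorem exists_isOneSelection_chromNum_eq_robustChromNum (G : SimpleGraph V) :
    ∃ f, IsOneSelection G f ∧ chromNum (oneRemoved G f) = robustChromNum G :=
  Nat.sInf_mem (s := {m | ∃ f, IsOneSelection G f ∧ chromNum (oneRemoved G f) = m})
    ⟨_, fun v => s(v, v), fun v => Sym2.mem_mk_left v v, rfl⟩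

theorem robustCliqueNum_le_robustChromNum [Fintype V] (G : SimpleGraph V) :
    robustCliqueNum G ≤ robustChromNum G := by
  obtain ⟨f, hf, hχ⟩ := exists_isOneSelection_chromNum_eq_robustChromNum G
  calc robustCliqueNum G ≤ (oneRemoved G f).cliqueNum := robustCliqueNum_le hf
    _ ≤ chromNum (oneRemoved G f) := cliqueNum_le_chromNum _
    _ = robustChromNum G := hχ

end

theorem robustCliqueNum_le_robustChromNum_le_of_chordal_general
    {V : Type} [Fintype V] (G : SimpleGraph V)
    (hchordal : IsChordalGraph G) :
    robustCliqueNum G ≤ robustChromNum G ∧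
      robustChromNum G ≤ (chromNum G + 1) / 2 := by
  obtain ⟨C, hC⟩ := (colorable_iff_exists_bdd_nat_coloring _).mp (colorable_chromNum G)
  have hforest : (G.fiberwise (C · / 2)).IsAcyclic :=
    (hchordal.fiberwise _).isAcyclic_of_cliqueFree_three
      ((colorable_fiberwise_div_two C).cliqueFree (by norm_num))
  obtain ⟨f, hf, hcover⟩ := hforest.exists_selection_edgeSet_subset
  have hcol : (oneRemoved G f).Colorable ((chromNum G + 1) / 2) :=
    ((colorable_iff_exists_bdd_nat_coloring _).mpr
      ⟨deleteEdgesFiberwiseColoring (C · / 2), fun v => by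
        change C v / 2 < _
        have := hC v
        omega⟩).mono_left (deleteEdges_anti hcover)
  exact ⟨robustCliqueNum_le_robustChromNum G,
    (robustChromNum_le hf).trans (chromNum_le_of_colorable hcol)⟩

/-- If `G` is a finite chordal graph, then `ω₁(G) ≤ χ₁(G) ≤ ⌈χ(G)/2⌉`. -/
theorem robustCliqueNum_le_robustChromNum_le_of_chordal
    {V : Type} [Fintype V] [DecidableEq V] (G : SimpleGraph V)
    (hchordal : IsChordalGraph G) :
    robustCliqueNum G ≤ robustChromNum G ∧
      robustChromNum G ≤ (chromNum G + 1) / 2 :=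
  robustCliqueNum_le_robustChromNum_le_of_chordal_general G hchordal
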